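/- Let z > 0 be a real number with φ₀(z) < 2, and let r ∈ ℝ. Define h(z; r) = log ω'(z) − r·log z + (1 − r)·log(2ω(z)/ω'(z) − z). Then the partial derivative of h with respect to z satisfies ∂h/∂z (z; r) = (φ₀(z) − 2r)·(φ₁(z) − 1) / ( z·(φ₀(z) − 2) ). -/

import Mathlib

/-- The `k`-th derivative of `ω(z) = Σ_{d ∈ Δ} z^d / d!`, as a real function. -/
noncomputable def omegaD (Δ : Set ℕ) (k : ℕ) (z : ℝ) : ℝ :=
  ∑' d : Δ, if k ≤ (d : ℕ) then z ^ ((d : ℕ) - k) / Nat.factorial ((d : ℕ) - k) else 0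

/-- `φ₀(z) = z ω'(z)/ω(z)`. -/
noncomputable def phi0 (Δ : Set ℕ) (z : ℝ) : ℝ := z * omegaD Δ 1 z / omegaD Δ 0 z

/-- `φ₁(z) = z ω''(z)/ω'(z)`. -/
noncomputable def phi1 (Δ : Set ℕ) (z : ℝ) : ℝ := z * omegaD Δ 2 z / omegaD Δ 1 z

/-!
Each term `z ^ (d - k) / (d - k)!` of `ω⁽ᵏ⁾` differentiates to the corresponding term of
`ω⁽ᵏ⁺¹⁾`, and the series of these terms are dominated on every ball by exponential series, so
`ω⁽ᵏ⁾` may be differentiated termwise. With `(ω, ω', ω'')` known, the derivative of `h` is the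
chain rule, and the stated closed form is a rational identity in `z, ω, ω', ω''` that holds as
soon as `z, ω, ω'` and `zω' − 2ω` are nonzero.
-/

open Real

noncomputable def omegaTerm (k n : ℕ) (z : ℝ) : ℝ :=
  if k ≤ n then z ^ (n - k) / (n - k).factorial else 0

lemma summable_omegaTerm (k : ℕ) (z : ℝ) : Summable (fun n => omegaTerm k n z) := by
  rw [← summable_nat_add_iff k]
  simpa [omegaTerm] using Real.summable_pow_div_factorial z

lemma omegaTerm_nonneg (k n : ℕ) {z : ℝ} (hz : 0 ≤ z) : 0 ≤ omegaTerm k n z := by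
  unfold omegaTerm
  split_ifs <;> positivity

lemma norm_omegaTerm_le (k n : ℕ) {z R : ℝ} (hR : |z| ≤ R) :
    ‖omegaTerm k n z‖ ≤ omegaTerm k n R := by
  unfold omegaTerm
  split_ifs
  · rw [Real.norm_eq_abs, abs_div, abs_pow, Nat.abs_cast]
    gcongr
  · simp

lemma hasDerivAt_omegaTerm (k n : ℕ) (z : ℝ) :
    HasDerivAt (omegaTerm k n) (omegaTerm (k + 1) n z) z := by
  unfold omegaTerm
  rcases lt_trichotomy k n with hkn | rfl | hnk
  · obtain ⟨m, rfl⟩ := Nat.exists_eq_add_of_lt hkn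
    have hm : k + m + 1 - k = m + 1 := by omega
    simp only [show k ≤ k + m + 1 by omega, show k + 1 ≤ k + m + 1 by omega, if_true, hm,
      show k + m + 1 - (k + 1) = m by omega]
    refine ((hasDerivAt_pow (m + 1) z).div_const _).congr_deriv ?_
    rw [Nat.add_sub_cancel, Nat.factorial_succ, Nat.cast_mul, mul_div_mul_left _ _ (by positivity)]
  · simpa using hasDerivAt_const z (1 : ℝ)
  · simpa [show ¬k ≤ n by omega, show ¬k + 1 ≤ n by omega] using hasDerivAt_const z (0 : ℝ)

lemma hasDerivAt_omegaD (Δ : Set ℕ) (k : ℕ) (z : ℝ) :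
    HasDerivAt (omegaD Δ k) (omegaD Δ (k + 1) z) z := by
  -- `omegaD Δ k` is definitionally `fun z => ∑' d : Δ, omegaTerm k d z`
  have hz : z ∈ Metric.ball (0 : ℝ) (|z| + 1) := by simp
  exact hasDerivAt_tsum_of_isPreconnected ((summable_omegaTerm (k + 1) (|z| + 1)).subtype Δ)
    Metric.isOpen_ball (convex_ball 0 _).isPreconnected
    (fun d y _ => hasDerivAt_omegaTerm k d.1 y)
    (fun d y hy => norm_omegaTerm_le (k + 1) d.1 (by simpa using (Metric.mem_ball.mp hy).le))
    hz ((summable_omegaTerm k z).subtype Δ) hz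

lemma omegaD_pos {Δ : Set ℕ} (h1 : 1 ∈ Δ) {z : ℝ} (hz : 0 < z) {k : ℕ} (hk : k ≤ 1) :
    0 < omegaD Δ k z := by
  have hterm : 0 < omegaTerm k 1 z := by
    interval_cases k <;> simp [omegaTerm, hz]
  calc 0 < omegaTerm k 1 z := hterm
    _ ≤ omegaD Δ k z := ((summable_omegaTerm k z).subtype Δ).le_tsum ⟨1, h1⟩
        (fun d _ => omegaTerm_nonneg k d.1 hz.le)

lemma hasDerivAt_log_sub_mul_log_add_mul_log {f g : ℝ → ℝ} {c z : ℝ} (r : ℝ)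
    (hf : HasDerivAt f (g z) z) (hg : HasDerivAt g c z)
    (hz : z ≠ 0) (hf0 : f z ≠ 0) (hg0 : g z ≠ 0) (hfg : z * g z ≠ 2 * f z) :
    HasDerivAt (fun t => log (g t) - r * log t + (1 - r) * log (2 * f t / g t - t))
      ((z * g z / f z - 2 * r) * (z * c / g z - 1) / (z * (z * g z / f z - 2))) z := by
  have hd : z * g z - 2 * f z ≠ 0 := sub_ne_zero.mpr hfg
  have hq : 2 * f z / g z - z = -((z * g z - 2 * f z) / g z) := by
    field_simp
    ring
  have hφ : z * g z / f z - 2 = (z * g z - 2 * f z) / f z := by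
    field_simp
  have hlog := (((hf.const_mul 2).div hg hg0).sub (hasDerivAt_id z)).log
    (by simpa [hq] using And.intro hd hg0)
  refine (((hg.log hg0).sub ((hasDerivAt_log hz).const_mul r)).add
    (hlog.const_mul (1 - r))).congr_deriv ?_
  simp only [Pi.div_apply, Pi.sub_apply, id, hq, hφ]
  -- as an atom, `d` is recognised by `field_simp` as a nonzero denominator
  generalize hdef : z * g z - 2 * f z = d at *
  field_simp
  linear_combination (g z * r - c * z) * hdef

/-- for real `z > 0` with `φ₀(z) < 2`, the function
`h(·; r) = log ω' − r log(·) + (1−r) log(2ω/ω' − ·)` has derivative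
`(φ₀(z) − 2r)(φ₁(z) − 1)/(z(φ₀(z) − 2))` at `z`. -/
theorem stmt17 (Δ : Set ℕ) (h1 : 1 ∈ Δ) (z : ℝ) (hz : 0 < z)
    (hφ : phi0 Δ z < 2) (r : ℝ) :
    HasDerivAt (fun t : ℝ => Real.log (omegaD Δ 1 t) - r * Real.log t +
        (1 - r) * Real.log (2 * omegaD Δ 0 t / omegaD Δ 1 t - t))
      ((phi0 Δ z - 2 * r) * (phi1 Δ z - 1) / (z * (phi0 Δ z - 2))) z := by
  have hω : 0 < omegaD Δ 0 z := omegaD_pos h1 hz zero_le_one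
  have hω' : 0 < omegaD Δ 1 z := omegaD_pos h1 hz le_rfl
  have hlt : z * omegaD Δ 1 z < 2 * omegaD Δ 0 z := by
    rwa [phi0, div_lt_iff₀ hω] at hφ
  exact hasDerivAt_log_sub_mul_log_add_mul_log r (hasDerivAt_omegaD Δ 0 z)
    (hasDerivAt_omegaD Δ 1 z) hz.ne' hω.ne' hω'.ne' hlt.ne
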